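/- Suppose κ is a regular uncountable cardinal, λ ≥ κ, cf(λ) < κ, and for every cardinal μ with κ ≤ μ < λ there is a family of at most λ clubs of [μ]^{<κ} such that every club of [μ]^{<κ} contains a member of this family. Then there exists a club of [λ]^{<κ} which contains no unbounded non-stationary subset, i.e., every unbounded subset of this club is stationary. -/

import Mathlib

open Cardinal Set

noncomputable section

/-- A finitary function on the ordinals: an arity `n` together with an
`n`-ary function on ordinals. -/
abbrev FinFun := Σ n : ℕ, (Fin n → Ordinal.{0}) → Ordinal.{0}

/-- `[λ]^{<κ}`: the collection of subsets of `λ` (viewed as the set of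
ordinals `< λ`) of cardinality `< κ`. -/
def smallSubsets (lam kap : Cardinal.{0}) : Set (Set Ordinal.{0}) :=
  {a | (∀ x ∈ a, x < lam.ord) ∧ Cardinal.mk ↥a < Cardinal.lift.{1} kap}

/-- The countable family `F` consists of finitary functions *on `λ`*. -/
def FamOn (lam : Cardinal.{0}) (F : Set FinFun) : Prop :=
  ∀ f ∈ F, ∀ x : Fin f.1 → Ordinal.{0}, (∀ i, x i < lam.ord) → f.2 x < lam.ord

/-- The club `C_F` of `[λ]^{<κ}` associated to a family `F` of finitary
functions on `λ`: the members `a` of `[λ]^{<κ}` closed under every function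
of `F` and such that `a ∩ κ` is an ordinal (an initial segment of `κ`). -/
def clubOf (lam kap : Cardinal.{0}) (F : Set FinFun) : Set (Set Ordinal.{0}) :=
  {a | a ∈ smallSubsets lam kap ∧
    (∀ f ∈ F, ∀ x : Fin f.1 → Ordinal.{0}, (∀ i, x i ∈ a) → f.2 x ∈ a) ∧
    ∃ β < kap.ord, a ∩ Set.Iio kap.ord = Set.Iio β}

/-- `C` is a club of `[λ]^{<κ}`. -/
def IsClubSet (lam kap : Cardinal.{0}) (C : Set (Set Ordinal.{0})) : Prop :=
  ∃ F : Set FinFun, F.Countable ∧ FamOn lam F ∧ C = clubOf lam kap F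

/-- `S` is a stationary subset of `[λ]^{<κ}`: it meets every club. -/
def IsStationarySet (lam kap : Cardinal.{0}) (S : Set (Set Ordinal.{0})) : Prop :=
  ∀ C, IsClubSet lam kap C → (S ∩ C).Nonempty

/-- `S` is an unbounded subset of `[λ]^{<κ}`: every member of `[λ]^{<κ}`
is contained in some member of `S`. -/
def IsUnbounded (lam kap : Cardinal.{0}) (S : Set (Set Ordinal.{0})) : Prop :=
  ∀ b ∈ smallSubsets lam kap, ∃ a ∈ S, b ⊆ a

/-- The club filter `E_{λ,κ}`: the filter generated by the clubs of
`[λ]^{<κ}`. -/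
def clubFilter (lam kap : Cardinal.{0}) : Filter (Set Ordinal.{0}) :=
  Filter.generate {C | IsClubSet lam kap C}

/-!
Since `cf λ < κ ≤ λ`, `λ` is a singular limit cardinal; fix a cofinal set `S ⊆ λ` of size
`cf λ < κ` and, for `i ∈ S`, a cardinal `μ_i ∈ [κ, λ)` above `i` together with a base
`(C_{i,α})_{α < λ}` of the club filter of `[μ_i]^{<κ}`. One countable family `F` on `λ`, taking
`i` and `α` as extra arguments, makes `a ∩ μ_i ∈ C_{i,α}` for every `a ∈ C_F` containing `i` and
`α`. Given an unbounded `U ⊆ C_F` and a club `C_G`, pick `α_i` with `C_{i,α_i}` inside the club of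
`[μ_i]^{<κ}` generated by `G` cut off at `μ_i`. A member `a ∈ U` containing all `i ∈ S` and `α_i`
then has every trace `a ∩ μ_i` closed under `G` below `μ_i`, so `a` is closed under `G`.
-/

universe u

theorem exists_mem_Ico_lt_ord_of_isSuccLimit {kap lam : Cardinal.{u}} (hkl : kap < lam)
    (hlim : Order.IsSuccLimit lam) :
    ∃ mu : Ordinal.{u} → Cardinal.{u},
      ∀ i, mu i ∈ Ico kap lam ∧ (i < lam.ord → i < (mu i).ord) := by
  have h : ∀ i : Ordinal.{u}, ∃ m ∈ Ico kap lam, i < lam.ord → i < m.ord := fun i =>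
    if hi : i < lam.ord then
      ⟨max kap (Order.succ i.card), ⟨le_max_left _ _, max_lt hkl (hlim.succ_lt (lt_ord.1 hi))⟩,
        fun _ => lt_ord.2 ((Order.lt_succ _).trans_le (le_max_right _ _))⟩
    else ⟨kap, ⟨le_rfl, hkl⟩, fun h => (hi h).elim⟩
  choose mu hmu using h
  exact ⟨mu, hmu⟩

theorem exists_mapsTo_surjOn_Iio_ord {β : Type (u + 1)} {D : Set β} (hD : D.Nonempty)
    {lam : Cardinal.{u}} (h : #D ≤ Cardinal.lift.{u + 1} lam) :
    ∃ e : Ordinal.{u} → β, MapsTo e univ D ∧ SurjOn e (Iio lam.ord) D := by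
  have : Nonempty D := hD.to_subtype
  rw [← card_ord lam, ← Cardinal.mk_Iio_ordinal] at h
  obtain ⟨emb⟩ := h
  refine ⟨fun α => if hα : α < lam.ord then (Function.invFun emb ⟨α, hα⟩ : D) else hD.some,
    fun α _ => ?_, fun x hx => ?_⟩
  · dsimp only
    split_ifs
    exacts [Subtype.coe_prop _, hD.some_mem]
  · refine ⟨emb ⟨x, hx⟩, (emb ⟨x, hx⟩).2, ?_⟩
    simp only [Function.leftInverse_invFun emb.injective _, dite_eq_left_iff]
    exact fun h => absurd (emb ⟨x, hx⟩).2 h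

theorem Ordinal.exists_cofinal_subset_Iio (o : Ordinal.{u}) :
    ∃ S ⊆ Iio o, (∀ y < o, ∃ i ∈ S, y ≤ i) ∧ #S = Cardinal.lift.{u + 1} o.cof := by
  obtain ⟨s, hs, hcard⟩ := Order.exists_cof_eq (Iio o)
  refine ⟨Subtype.val '' s, fun _ ⟨x, _, hx⟩ => hx ▸ x.2, fun y hy => ?_, ?_⟩
  · obtain ⟨i, hi, hyi⟩ := hs ⟨y, hy⟩
    exact ⟨i, mem_image_of_mem _ hi, hyi⟩
  · rw [mk_image_eq Subtype.val_injective, hcard, Ordinal.cof_Iio, Ordinal.lift_cof]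

def FinFun.truncate (o : Ordinal.{0}) (f : FinFun) : FinFun :=
  ⟨f.1, fun x => if f.2 x < o then f.2 x else 0⟩

def ClosedUnder (F : Set FinFun) (a : Set Ordinal.{0}) : Prop :=
  ∀ f ∈ F, ∀ x : Fin f.1 → Ordinal.{0}, (∀ j, x j ∈ a) → f.2 x ∈ a

def ClosedBelow (o : Ordinal.{0}) (F : Set FinFun) (a : Set Ordinal.{0}) : Prop :=
  ∀ f ∈ F, ∀ x : Fin f.1 → Ordinal.{0}, (∀ j, x j ∈ a) → f.2 x < o → f.2 x ∈ a

theorem famOn_image_truncate {lam : Cardinal.{0}} (h0 : 0 < lam.ord) (G : Set FinFun) :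
    FamOn lam (FinFun.truncate lam.ord '' G) := by
  rintro _ ⟨g, -, rfl⟩ x -
  dsimp only [FinFun.truncate]
  split_ifs with h
  exacts [h, h0]

theorem isClubSet_clubOf_image_truncate {mu : Cardinal.{0}} (kap : Cardinal.{0})
    (h0 : 0 < mu.ord) {G : Set FinFun} (hG : G.Countable) :
    IsClubSet mu kap (clubOf mu kap (FinFun.truncate mu.ord '' G)) :=
  ⟨_, hG.image _, famOn_image_truncate h0 G, rfl⟩

theorem ClosedUnder.closedBelow_of_truncate {o : Ordinal.{0}} {G : Set FinFun}
    {a : Set Ordinal.{0}} (h : ClosedUnder (FinFun.truncate o '' G) a) : ClosedBelow o G a := by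
  intro g hg x hx hlt
  simpa [FinFun.truncate, hlt] using h _ ⟨g, hg, rfl⟩ x hx

theorem ClosedBelow.closedUnder_inter_Iio {o : Ordinal.{0}} {F : Set FinFun}
    {a : Set Ordinal.{0}} {mu : Cardinal.{0}} (h : ClosedBelow o F a) (hF : FamOn mu F)
    (hle : mu.ord ≤ o) : ClosedUnder F (a ∩ Iio mu.ord) := by
  intro f hf x hx
  have hlt : f.2 x < mu.ord := hF f hf x fun j => (hx j).2
  exact ⟨h f hf x (fun j => (hx j).1) (hlt.trans_le hle), hlt⟩

theorem ClosedBelow.closedUnder {lam : Cardinal.{0}} {F : Set FinFun} {a : Set Ordinal.{0}}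
    (h : ClosedBelow lam.ord F a) (hF : FamOn lam F) (ha : ∀ x ∈ a, x < lam.ord) :
    ClosedUnder F a :=
  fun f hf x hx => h f hf x hx (hF f hf x fun j => ha _ (hx j))

/-- A finite tuple of arguments together with its value lies below a single `ν i`. -/
theorem closedBelow_of_cofinal {o : Ordinal.{0}} {G : Set FinFun} {a S : Set Ordinal.{0}}
    {ν : Ordinal.{0} → Ordinal.{0}} (ha : ∀ x ∈ a, x < o) (hS : ∀ y < o, ∃ i ∈ S, y < ν i)
    (hcl : ∀ i ∈ S, ClosedBelow (ν i) G (a ∩ Iio (ν i))) : ClosedBelow o G a := by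
  intro g hg x hx hlt
  have hsup : Finset.univ.sup x < o :=
    (Finset.sup_lt_iff (bot_le.trans_lt hlt)).2 fun j _ => ha _ (hx j)
  obtain ⟨i, hiS, hi⟩ := hS _ (max_lt hlt hsup)
  have hxi : ∀ j, x j < ν i := fun j =>
    ((Finset.le_sup (Finset.mem_univ j)).trans (le_max_right _ _)).trans_lt hi
  exact (hcl i hiS g hg x (fun j => ⟨hx j, hxi j⟩) ((le_max_left _ _).trans_lt hi)).1

theorem inter_Iio_mem_clubOf {lam kap mu : Cardinal.{0}} {F Φ : Set FinFun}
    {a : Set Ordinal.{0}} (ha : a ∈ clubOf lam kap F) (hkm : kap ≤ mu)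
    (hcl : ClosedUnder Φ (a ∩ Iio mu.ord)) : a ∩ Iio mu.ord ∈ clubOf mu kap Φ := by
  obtain ⟨⟨-, hcard⟩, -, β, hβ, haβ⟩ := ha
  refine ⟨⟨fun x hx => hx.2, (mk_le_mk_of_subset inter_subset_left).trans_lt hcard⟩, hcl, β, hβ,
    ?_⟩
  rw [inter_assoc, Iio_inter_Iio, min_eq_right (ord_le_ord.2 hkm), haβ]

/-- One countable family on `λ` simulates every `Φ i α` at once, with `i` and `α` as two extra
arguments. -/
theorem exists_countable_famOn_closedBelow (lam : Cardinal.{0}) (h0 : 0 < lam.ord)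
    (Φ : Ordinal.{0} → Ordinal.{0} → Set FinFun) (hΦ : ∀ i α, (Φ i α).Countable) :
    ∃ F : Set FinFun, F.Countable ∧ FamOn lam F ∧
      ∀ a, ClosedUnder F a → ∀ i ∈ a, ∀ α ∈ a, ClosedBelow lam.ord (Φ i α) a := by
  have henum : ∀ i α (n : ℕ), ∃ e : ℕ → (Fin n → Ordinal.{0}) → Ordinal.{0},
      {g | (⟨n, g⟩ : FinFun) ∈ Φ i α} ⊆ range e := fun i α _ =>
    countable_iff_exists_subset_range.1 ((hΦ i α).preimage sigma_mk_injective)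
  choose e he using henum
  let G : ℕ × ℕ → FinFun := fun p =>
    ⟨p.1 + 1 + 1, fun v => e (v 0) (v 1) p.1 p.2 (Fin.tail (Fin.tail v))⟩
  refine ⟨FinFun.truncate lam.ord '' range G, (countable_range G).image _,
    famOn_image_truncate h0 _, fun a ha i hi α hα => ?_⟩
  rintro ⟨n, g⟩ hg x hx hlt
  obtain ⟨m, rfl⟩ := he i α n hg
  have hv : ∀ j, (Fin.cons i (Fin.cons α x) : Fin (n + 1 + 1) → Ordinal.{0}) j ∈ a := by
    refine Fin.cases hi (Fin.cases hα fun j => ?_)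
    simpa using hx j
  simpa [G] using ha.closedBelow_of_truncate (G (n, m)) (mem_range_self _) _ hv (by simpa [G])

theorem exists_clubOf_cofinal_of_mk_le {lam kap mu : Cardinal.{0}}
    {D : Set (Set (Set Ordinal.{0}))} (hcard : #D ≤ Cardinal.lift.{1} lam)
    (hclub : ∀ C ∈ D, IsClubSet mu kap C)
    (hcof : ∀ C, IsClubSet mu kap C → ∃ C' ∈ D, C' ⊆ C) :
    ∃ Φ : Ordinal.{0} → Set FinFun, (∀ α, (Φ α).Countable ∧ FamOn mu (Φ α)) ∧
      ∀ C, IsClubSet mu kap C → ∃ α < lam.ord, clubOf mu kap (Φ α) ⊆ C := by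
  obtain ⟨C₀, hC₀, -⟩ := hcof _ ⟨∅, countable_empty, fun _ h => h.elim, rfl⟩
  obtain ⟨e, he, hsurj⟩ := exists_mapsTo_surjOn_Iio_ord ⟨C₀, hC₀⟩ hcard
  choose Φ hΦ using fun α => hclub _ (he (mem_univ α))
  refine ⟨Φ, fun α => ⟨(hΦ α).1, (hΦ α).2.1⟩, fun C hC => ?_⟩
  obtain ⟨C', hC'D, hC'C⟩ := hcof C hC
  obtain ⟨α, hα, rfl⟩ := hsurj hC'D
  exact ⟨α, hα, (hΦ α).2.2 ▸ hC'C⟩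

theorem union_range_mem_smallSubsets {lam kap : Cardinal.{0}} (hkap : ℵ₀ ≤ kap)
    {S : Set Ordinal.{0}} (hS : S ∈ smallSubsets lam kap) {f : S → Ordinal.{0}}
    (hf : ∀ i, f i < lam.ord) : S ∪ range f ∈ smallSubsets lam kap := by
  refine ⟨fun x hx => hx.elim (hS.1 x) fun ⟨i, hx⟩ => hx ▸ hf i, ?_⟩
  calc #(S ∪ range f : Set Ordinal.{0}) ≤ #S + #(range f) := mk_union_le _ _
    _ < Cardinal.lift.{1} kap :=
      add_lt_of_lt (aleph0_le_lift.2 hkap) hS.2 (mk_range_le.trans_lt hS.2)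

theorem mem_clubOf_of_cofinal {lam kap : Cardinal.{0}} {F G : Set FinFun}
    {a S : Set Ordinal.{0}} {mu : Ordinal.{0} → Cardinal.{0}} (ha : a ∈ clubOf lam kap F)
    (hG : FamOn lam G) (hS : ∀ y < lam.ord, ∃ i ∈ S, y < (mu i).ord)
    (hcl : ∀ i ∈ S, a ∩ Iio (mu i).ord ∈ clubOf (mu i) kap (FinFun.truncate (mu i).ord '' G)) :
    a ∈ clubOf lam kap G := by
  obtain ⟨hsmall, -, hkap⟩ := ha
  refine ⟨hsmall, ClosedBelow.closedUnder ?_ hG hsmall.1, hkap⟩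
  exact closedBelow_of_cofinal hsmall.1 hS fun i hi =>
    ClosedUnder.closedBelow_of_truncate (hcl i hi).2.1

theorem exists_club_all_unbounded_subsets_stationary_general
    (lam kap : Cardinal.{0}) (hreg : kap.IsRegular)
    (hkl : kap ≤ lam) (hcof : lam.ord.cof < kap)
    (hfam : ∀ mu : Cardinal.{0}, kap ≤ mu → mu < lam →
      ∃ D : Set (Set (Set Ordinal.{0})),
        Cardinal.mk ↥D ≤ Cardinal.lift.{1} lam ∧
        (∀ C ∈ D, IsClubSet mu kap C) ∧
        ∀ C, IsClubSet mu kap C → ∃ C' ∈ D, C' ⊆ C) :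
    ∃ Cs, IsClubSet lam kap Cs ∧
      ∀ U ⊆ Cs, IsUnbounded lam kap U → IsStationarySet lam kap U := by
  have hsing : lam.IsSingular := ⟨hreg.aleph0_le.trans hkl, (hcof.trans_le hkl).ne⟩
  have hkl' : kap < lam := hkl.lt_of_ne fun h => hsing.not_isRegular (h ▸ hreg)
  obtain ⟨mu, hmu⟩ := exists_mem_Ico_lt_ord_of_isSuccLimit hkl' hsing.isSuccLimit
  choose D hDcard hDclub hDcof using fun i => hfam (mu i) (hmu i).1.1 (hmu i).1.2
  choose Φ hΦ hΦcof using fun i =>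
    exists_clubOf_cofinal_of_mk_le (hDcard i) (hDclub i) (hDcof i)
  obtain ⟨F, hFc, hFon, hF⟩ := exists_countable_famOn_closedBelow lam
    (pos_of_gt (ord_lt_ord.2 hkl')) Φ fun i α => (hΦ i α).1
  refine ⟨clubOf lam kap F, ⟨F, hFc, hFon, rfl⟩, ?_⟩
  rintro U hUF hU _ ⟨G, hGc, hGon, rfl⟩
  obtain ⟨S, hSlam, hScof, hScard⟩ := Ordinal.exists_cofinal_subset_Iio lam.ord
  have hSmu : ∀ i ∈ S, i < (mu i).ord := fun i hi => (hmu i).2 (hSlam hi)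
  have hScofmu : ∀ y < lam.ord, ∃ i ∈ S, y < (mu i).ord := fun y hy =>
    (hScof y hy).imp fun i ⟨hiS, hyi⟩ => ⟨hiS, hyi.trans_lt (hSmu i hiS)⟩
  choose α hαlt hαsub using fun i : S =>
    hΦcof i _ (isClubSet_clubOf_image_truncate kap (pos_of_gt (hSmu i i.2)) hGc)
  obtain ⟨a, haU, hSa⟩ := hU _
    (union_range_mem_smallSubsets hreg.aleph0_le ⟨hSlam, hScard ▸ lift_lt.2 hcof⟩ hαlt)
  refine ⟨a, haU, mem_clubOf_of_cofinal (hUF haU) hGon hScofmu fun i hi => ?_⟩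
  have hcl := hF a (hUF haU).2.1 i (hSa (Or.inl hi)) _ (hSa (Or.inr ⟨⟨i, hi⟩, rfl⟩))
  exact hαsub ⟨i, hi⟩ (inter_Iio_mem_clubOf (hUF haU) (hmu i).1.1
    (hcl.closedUnder_inter_Iio (hΦ i _).2 (ord_le_ord.2 (hmu i).1.2.le)))

/-- If `κ` is regular uncountable, `λ ≥ κ`, `cf(λ) < κ`, and for every
cardinal `μ` with `κ ≤ μ < λ` there is a family of at most `λ` clubs of
`[μ]^{<κ}` such that every club of `[μ]^{<κ}` contains a member of the
family, then some club of `[λ]^{<κ}` has all its unbounded subsets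
stationary. -/
theorem exists_club_all_unbounded_subsets_stationary
    (lam kap : Cardinal.{0}) (hreg : kap.IsRegular) (hunc : ℵ₀ < kap)
    (hkl : kap ≤ lam) (hcof : lam.ord.cof < kap)
    (hfam : ∀ mu : Cardinal.{0}, kap ≤ mu → mu < lam →
      ∃ D : Set (Set (Set Ordinal.{0})),
        Cardinal.mk ↥D ≤ Cardinal.lift.{1} lam ∧
        (∀ C ∈ D, IsClubSet mu kap C) ∧
        ∀ C, IsClubSet mu kap C → ∃ C' ∈ D, C' ⊆ C) :
    ∃ Cs, IsClubSet lam kap Cs ∧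
      ∀ U ⊆ Cs, IsUnbounded lam kap U → IsStationarySet lam kap U :=
  exists_club_all_unbounded_subsets_stationary_general lam kap hreg hkl hcof hfam
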